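/- Let a > 1, q > 0, and let k ∈ ℝ satisfy |a − k| < 1 (a stabilizing linear feedback gain). Let w : ℕ → ℝ be any disturbance sequence and define the closed-loop state sequence by x_0 = 0 and x_{t+1} = (a − k)·x_t + w_t for t ≥ 0. Then for every T ≥ 1, the cost of the linear controller u_t = −k·x_t satisfies Σ_{t=0}^T (q + k²)·x_t² ≥ ((q + (a − 1)²)/4) · Σ_{t=0}^{T−1} w_t². -/

import Mathlib

/-!
Writing `ρ = a - k`, the disturbance is recovered from the state as `w t = x (t + 1) - ρ * x t`.
Since `|ρ| ≤ 1`, each `w t ^ 2` is at most `2 * (x (t + 1) ^ 2 + x t ^ 2)`, and as `x 0 = 0` both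
shifted energies are bounded by the state energy `∑_{t ≤ T} x t ^ 2`, so the disturbance energy is
at most four times it. Stability together with `a > 1` forces `k ≥ a - 1 > 0`, whence
`q + k ^ 2 ≥ q + (a - 1) ^ 2`.
-/

open Finset

section ClosedLoop

variable {R : Type*} [CommRing R] [LinearOrder R] [IsStrictOrderedRing R]

lemma sq_sub_mul_le_two_mul_sq_add_sq {ρ : R} (hρ : |ρ| ≤ 1) (x y : R) :
    (y - ρ * x) ^ 2 ≤ 2 * (y ^ 2 + x ^ 2) := by
  have hρx : (ρ * x) ^ 2 ≤ x ^ 2 := by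
    rw [mul_pow]
    exact mul_le_of_le_one_left (sq_nonneg x) ((sq_le_one_iff_abs_le_one ρ).mpr hρ)
  calc (y - ρ * x) ^ 2 = (y + -(ρ * x)) ^ 2 := by rw [sub_eq_add_neg]
    _ ≤ 2 * (y ^ 2 + (ρ * x) ^ 2) := by rw [← neg_sq (ρ * x)]; exact add_sq_le
    _ ≤ 2 * (y ^ 2 + x ^ 2) := by gcongr

lemma sum_range_sq_sub_mul_le {ρ : R} (hρ : |ρ| ≤ 1) (x : ℕ → R) (hx0 : x 0 = 0) (T : ℕ) :
    ∑ t ∈ range T, (x (t + 1) - ρ * x t) ^ 2 ≤ 4 * ∑ t ∈ range (T + 1), x t ^ 2 := by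
  have hshift : ∑ t ∈ range T, x (t + 1) ^ 2 = ∑ t ∈ range (T + 1), x t ^ 2 := by
    rw [sum_range_succ' _ T, hx0]
    ring
  have htrunc : ∑ t ∈ range T, x t ^ 2 ≤ ∑ t ∈ range (T + 1), x t ^ 2 := by
    rw [sum_range_succ]
    exact le_add_of_nonneg_right (sq_nonneg _)
  calc ∑ t ∈ range T, (x (t + 1) - ρ * x t) ^ 2
      ≤ ∑ t ∈ range T, 2 * (x (t + 1) ^ 2 + x t ^ 2) :=
        sum_le_sum fun t _ => sq_sub_mul_le_two_mul_sq_add_sq hρ _ _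
    _ = 2 * ∑ t ∈ range T, x (t + 1) ^ 2 + 2 * ∑ t ∈ range T, x t ^ 2 := by
        rw [← mul_add, ← sum_add_distrib, mul_sum]
    _ ≤ 4 * ∑ t ∈ range (T + 1), x t ^ 2 := by
        rw [hshift]
        linear_combination 2 * htrunc

lemma sum_range_sq_disturbance_le {ρ : R} (hρ : |ρ| ≤ 1) (w x : ℕ → R) (hx0 : x 0 = 0)
    (hxrec : ∀ t, x (t + 1) = ρ * x t + w t) (T : ℕ) :
    ∑ t ∈ range T, w t ^ 2 ≤ 4 * ∑ t ∈ range (T + 1), x t ^ 2 := by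
  have hw : ∀ t, w t = x (t + 1) - ρ * x t := fun t => by rw [hxrec t]; ring
  simp only [hw]
  exact sum_range_sq_sub_mul_le hρ x hx0 T

lemma sq_sub_one_le_sq_of_abs_sub_le_one {a k : R} (ha : 1 ≤ a) (hk : |a - k| ≤ 1) :
    (a - 1) ^ 2 ≤ k ^ 2 := by
  have hak : a - 1 ≤ k := by linarith [(abs_le.mp hk).2]
  exact pow_le_pow_left₀ (sub_nonneg.mpr ha) hak 2

end ClosedLoop

theorem stmt16 (a q k : ℝ) (ha : 1 < a) (hq : 0 < q) (hk : |a - k| < 1)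
    (w : ℕ → ℝ) (x : ℕ → ℝ)
    (hx0 : x 0 = 0) (hxrec : ∀ t : ℕ, x (t + 1) = (a - k) * x t + w t)
    (T : ℕ) :
    ∑ t ∈ Finset.range (T + 1), (q + k ^ 2) * x t ^ 2
      ≥ (q + (a - 1) ^ 2) / 4 * ∑ t ∈ Finset.range T, w t ^ 2 := by
  have hw := sum_range_sq_disturbance_le hk.le w x hx0 hxrec T
  have hgain := sq_sub_one_le_sq_of_abs_sub_le_one ha.le hk.le
  have hS : 0 ≤ ∑ t ∈ range (T + 1), x t ^ 2 := sum_nonneg fun t _ => sq_nonneg (x t)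
  calc (q + (a - 1) ^ 2) / 4 * ∑ t ∈ range T, w t ^ 2
      ≤ (q + (a - 1) ^ 2) / 4 * (4 * ∑ t ∈ range (T + 1), x t ^ 2) := by gcongr
    _ = (q + (a - 1) ^ 2) * ∑ t ∈ range (T + 1), x t ^ 2 := by ring
    _ ≤ (q + k ^ 2) * ∑ t ∈ range (T + 1), x t ^ 2 := by gcongr
    _ = ∑ t ∈ range (T + 1), (q + k ^ 2) * x t ^ 2 := mul_sum _ _ _
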